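/- Let 𝔪 and 𝔫 be two Speh multisegments supported on ℤ: 𝔪 = (Δ₁, …, Δ_N) with Δ_{i+1} = Δ_i − 1, and 𝔫 = (Δ'₁, …, Δ'_{N'}) with Δ'_{j+1} = Δ'_j − 1, where Δ_i = [a_i, b_i] and Δ'_j = [a'_j, b'_j]. Let supp 𝔪 = [a_N, b_1] and supp 𝔫 = [a'_{N'}, b'_1] be the supports (unions of segments). With X = {(i,j) : Δ_i ≺ Δ'_j}, Y = {(i,j) : (Δ_i − 1) ≺ Δ'_j} and the relation (i₂,j₂) ↝ (i₁,j₁) iff (i₁ = i₂ and Δ'_{j₂} ≺ Δ'_{j₁}) or (j₁ = j₂ and Δ_{i₁} ≺ Δ_{i₂}): there is no ↝-matching function from X to Y if and only if all of the following hold: supp 𝔪 ≺ supp 𝔫, a_1 < a'_1, b_1 < b'_1, a_N < a'_{N'}, and b_N < b'_{N'}. -/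

import Mathlib

/-- A segment `[a, b]` of integers (meaningful when `a ≤ b`). -/
structure Seg where
  a : ℤ
  b : ℤ
deriving DecidableEq

/-- `Δ` is a genuine segment, i.e. `a ≤ b`. -/
def Seg.IsSeg (Δ : Seg) : Prop := Δ.a ≤ Δ.b

/-- Containment of segments `Δ ⊆ Δ'`. -/
def Seg.Sub (Δ Δ' : Seg) : Prop := Δ'.a ≤ Δ.a ∧ Δ.b ≤ Δ'.b

/-- `Δ` and `Δ'` are linked: their union is again a segment (interval) but neither is
contained in the other. -/
def Seg.Linked (Δ Δ' : Seg) : Prop :=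
  max Δ.a Δ'.a ≤ min Δ.b Δ'.b + 1 ∧ ¬ Δ.Sub Δ' ∧ ¬ Δ'.Sub Δ

/-- `Δ` precedes `Δ'` (`Δ ≺ Δ'`): they are linked and `Δ` starts strictly earlier. -/
def Seg.Prec (Δ Δ' : Seg) : Prop := Δ.Linked Δ' ∧ Δ.a < Δ'.a

/-- The shifted segment `Δ - 1 = [a-1, b-1]`. -/
def Seg.shift (Δ : Seg) : Seg := ⟨Δ.a - 1, Δ.b - 1⟩

/-- There exists a matching function from `X` into `Y` for the relation `R`
(read `R q p` as `q ↝ p`): an injective `f : X → Y` with `f p ↝ p` for all `p ∈ X`. -/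
def ExistsMatching {ι : Type*} (X Y : Set ι) (R : ι → ι → Prop) : Prop :=
  ∃ f : X → Y, Function.Injective f ∧ ∀ p : X, R (f p : ι) (p : ι)

lemma seg_prec_iff (Δ Δ' : Seg) :
    Δ.Prec Δ' ↔ Δ.a < Δ'.a ∧ Δ.b < Δ'.b ∧ Δ'.a ≤ Δ.b + 1 := by
  simp only [Seg.Prec, Seg.Linked, Seg.Sub]
  omega

lemma seg_mk_prec_iff (x y x' y' : ℤ) :
    (Seg.mk x y).Prec (Seg.mk x' y') ↔ x < x' ∧ y < y' ∧ x' ≤ y + 1 :=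
  seg_prec_iff _ _

lemma speh_formula (N : ℤ) (m : ℤ → Seg)
    (hmSpeh : ∀ i, 0 ≤ i → i + 1 < N → m (i + 1) = (m i).shift) :
    ∀ i, 0 ≤ i → i < N → m i = ⟨(m 0).a - i, (m 0).b - i⟩ := by
  have key : ∀ k : ℕ, (k : ℤ) < N → m (k : ℤ) = ⟨(m 0).a - k, (m 0).b - k⟩ := by
    intro k
    induction k with
    | zero => intro _; simp only [Nat.cast_zero, sub_zero]
    | succ k ih =>
      intro hk
      have hk1 : ((k + 1 : ℕ) : ℤ) = (k : ℤ) + 1 := by push_cast; ring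
      have hk' : (k : ℤ) + 1 < N := by omega
      rw [hk1, hmSpeh k (Int.ofNat_nonneg k) hk', ih (by omega)]
      simp only [Seg.shift, Seg.mk.injEq]
      omega
  intro i h0 hiN
  have h : i = ((i.toNat : ℤ)) := (Int.toNat_of_nonneg h0).symm
  rw [h]
  exact key i.toNat (by omega)

lemma diag_card (N N' lo hi : ℤ) (hhi0 : hi ≤ 0) (hhiN : hi ≤ N - N') :
    ((Finset.Icc (0:ℤ) (N-1) ×ˢ Finset.Icc (0:ℤ) (N'-1)).filter
      (fun p : ℤ × ℤ => lo ≤ p.1 - p.2 ∧ p.1 - p.2 ≤ hi)).card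
    = ∑ d ∈ Finset.Icc lo hi, (d + N').toNat := by
  rw [Finset.card_eq_sum_card_fiberwise (f := fun p : ℤ × ℤ => p.1 - p.2)
    (t := Finset.Icc lo hi) (by intro x hx; simp at hx ⊢; omega)]
  refine Finset.sum_congr rfl fun d hd => ?_
  simp only [Finset.mem_Icc] at hd
  have h2 : (((Finset.Icc (0:ℤ) (N-1) ×ˢ Finset.Icc (0:ℤ) (N'-1)).filter
      (fun p : ℤ × ℤ => lo ≤ p.1 - p.2 ∧ p.1 - p.2 ≤ hi)).filter
      (fun p => p.1 - p.2 = d)).card = (Finset.Icc (0:ℤ) (d + N' - 1)).card := by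
    apply Finset.card_nbij' (i := fun p : ℤ × ℤ => p.1) (j := fun i : ℤ => (i, i - d))
    · intro p hp; simp only [Finset.mem_coe, Finset.mem_filter, Finset.mem_product, Finset.mem_Icc] at hp
      simp only [Finset.mem_coe, Finset.mem_Icc]; omega
    · intro i hi; simp only [Finset.mem_coe, Finset.mem_Icc] at hi
      simp only [Finset.mem_coe, Finset.mem_filter, Finset.mem_product, Finset.mem_Icc]; omega
    · intro p hp; simp only [Finset.mem_coe, Finset.mem_filter, Finset.mem_product, Finset.mem_Icc] at hp
      obtain ⟨x, y⟩ := p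
      simp only [Prod.mk.injEq] at hp ⊢
      exact ⟨trivial, by omega⟩
    · intro i hi; simp
  rw [h2, Int.card_Icc]
  omega

/-- For two Speh multisegments `𝔪 = (Δ₀, …, Δ_{N-1})`, `𝔫 = (Δ'₀, …, Δ'_{N'-1})`
(consecutive segments shifted by one), there is no matching function from
`X = {(i,j) : Δ_i ≺ Δ'_j}` to `Y = {(i,j) : (Δ_i − 1) ≺ Δ'_j}` for the relation
`(i₂,j₂) ↝ (i₁,j₁) ↔ (i₁ = i₂ ∧ Δ'_{j₂} ≺ Δ'_{j₁}) ∨ (j₁ = j₂ ∧ Δ_{i₁} ≺ Δ_{i₂})`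
iff `supp 𝔪 ≺ supp 𝔫`, `a₀ < a'₀`, `b₀ < b'₀`, `a_{N-1} < a'_{N'-1}` and
`b_{N-1} < b'_{N'-1}`. -/
theorem two_speh_no_matching_iff (N N' : ℤ) (hN : 0 < N) (hN' : 0 < N')
    (m n : ℤ → Seg)
    (hm : ∀ i, 0 ≤ i → i < N → (m i).IsSeg)
    (hn : ∀ j, 0 ≤ j → j < N' → (n j).IsSeg)
    (hmSpeh : ∀ i, 0 ≤ i → i + 1 < N → m (i + 1) = (m i).shift)
    (hnSpeh : ∀ j, 0 ≤ j → j + 1 < N' → n (j + 1) = (n j).shift) :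
    ¬ ExistsMatching
        {p : ℤ × ℤ | 0 ≤ p.1 ∧ p.1 < N ∧ 0 ≤ p.2 ∧ p.2 < N' ∧ (m p.1).Prec (n p.2)}
        {p : ℤ × ℤ | 0 ≤ p.1 ∧ p.1 < N ∧ 0 ≤ p.2 ∧ p.2 < N' ∧ (m p.1).shift.Prec (n p.2)}
        (fun q p => (p.1 = q.1 ∧ (n q.2).Prec (n p.2)) ∨ (p.2 = q.2 ∧ (m p.1).Prec (m q.1))) ↔
      (Seg.Prec ⟨(m (N - 1)).a, (m 0).b⟩ ⟨(n (N' - 1)).a, (n 0).b⟩ ∧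
        (m 0).a < (n 0).a ∧ (m 0).b < (n 0).b ∧
        (m (N - 1)).a < (n (N' - 1)).a ∧ (m (N - 1)).b < (n (N' - 1)).b) := by
  classical
  have hma := speh_formula N m hmSpeh
  have hnb := speh_formula N' n hnSpeh
  have hm0 : (m 0).a ≤ (m 0).b := hm 0 le_rfl hN
  have hn0 : (n 0).a ≤ (n 0).b := hn 0 le_rfl hN'
  set a : ℤ := (m 0).a with ha
  set b : ℤ := (m 0).b with hb
  set a' : ℤ := (n 0).a with ha'
  set b' : ℤ := (n 0).b with hb'
  obtain ⟨u, hu1, hu2, hu3⟩ : ∃ u : ℤ, a - a' ≤ u ∧ b - b' ≤ u ∧ (u = a - a' ∨ u = b - b') :=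
    ⟨max (a - a') (b - b'), le_max_left _ _, le_max_right _ _, max_choice _ _⟩
  set v : ℤ := b - a' with hv
  set Xs : Set (ℤ × ℤ) :=
    {p : ℤ × ℤ | 0 ≤ p.1 ∧ p.1 < N ∧ 0 ≤ p.2 ∧ p.2 < N' ∧ (m p.1).Prec (n p.2)} with hXs
  set Ys : Set (ℤ × ℤ) :=
    {p : ℤ × ℤ | 0 ≤ p.1 ∧ p.1 < N ∧ 0 ≤ p.2 ∧ p.2 < N' ∧ (m p.1).shift.Prec (n p.2)} with hYs
  -- membership characterizations
  have hX : ∀ p : ℤ × ℤ, p ∈ Xs ↔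
      0 ≤ p.1 ∧ p.1 < N ∧ 0 ≤ p.2 ∧ p.2 < N' ∧ u + 1 ≤ p.1 - p.2 ∧ p.1 - p.2 ≤ v + 1 := by
    intro p
    constructor
    · rintro ⟨h1, h2, h3, h4, h5⟩
      rw [hma p.1 h1 h2, hnb p.2 h3 h4, seg_mk_prec_iff] at h5
      exact ⟨h1, h2, h3, h4, by omega⟩
    · rintro ⟨h1, h2, h3, h4, h5, h6⟩
      refine ⟨h1, h2, h3, h4, ?_⟩
      rw [hma p.1 h1 h2, hnb p.2 h3 h4, seg_mk_prec_iff]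
      omega
  have hY : ∀ p : ℤ × ℤ, p ∈ Ys ↔
      0 ≤ p.1 ∧ p.1 < N ∧ 0 ≤ p.2 ∧ p.2 < N' ∧ u ≤ p.1 - p.2 ∧ p.1 - p.2 ≤ v := by
    intro p
    have hsh : ∀ x y : ℤ, (Seg.mk x y).shift = Seg.mk (x - 1) (y - 1) := fun _ _ => rfl
    constructor
    · rintro ⟨h1, h2, h3, h4, h5⟩
      rw [hma p.1 h1 h2, hnb p.2 h3 h4, hsh, seg_mk_prec_iff] at h5
      exact ⟨h1, h2, h3, h4, by omega⟩
    · rintro ⟨h1, h2, h3, h4, h5, h6⟩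
      refine ⟨h1, h2, h3, h4, ?_⟩
      rw [hma p.1 h1 h2, hnb p.2 h3 h4, hsh, seg_mk_prec_iff]
      omega
  -- RHS characterization
  have hRHS : (Seg.Prec ⟨(m (N - 1)).a, b⟩ ⟨(n (N' - 1)).a, b'⟩ ∧
        a < a' ∧ b < b' ∧
        (m (N - 1)).a < (n (N' - 1)).a ∧ (m (N - 1)).b < (n (N' - 1)).b) ↔
      (u + 1 ≤ 0 ∧ u + 1 ≤ N - N' ∧ -N' ≤ v) := by
    rw [hma (N-1) (by omega) (by omega), hnb (N'-1) (by omega) (by omega)]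
    rw [show (Seg.mk (a - (N-1)) (b - (N-1))).a = a - (N-1) from rfl,
      show (Seg.mk (a' - (N'-1)) (b' - (N'-1))).a = a' - (N'-1) from rfl,
      show (Seg.mk (a - (N-1)) (b - (N-1))).b = b - (N-1) from rfl,
      show (Seg.mk (a' - (N'-1)) (b' - (N'-1))).b = b' - (N'-1) from rfl,
      seg_mk_prec_iff]
    omega
  rw [hRHS]
  constructor
  · -- no matching → conditions (contrapositive: construct matchings)
    intro hnm
    by_contra hR
    apply hnm
    have hcases : (v + N' < 0) ∨ (0 ≤ u) ∨ (N - N' ≤ u) := by omega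
    rcases hcases with hc | hc | hc
    · -- X is empty
      have hempty : ∀ p : Xs, False := by
        rintro ⟨p, hp⟩
        rw [hX] at hp
        omega
      exact ⟨fun p => (hempty p).elim, fun p => (hempty p).elim, fun p => (hempty p).elim⟩
    · -- shift rows: f (i, j) = (i - 1, j)
      refine ⟨fun p => ⟨((p : ℤ × ℤ).1 - 1, (p : ℤ × ℤ).2), ?_⟩, ?_, ?_⟩
      · have hp := (hX p.1).mp p.2
        rw [hY]
        dsimp only
        omega
      · intro p q hpq
        have h := Subtype.ext_iff.mp hpq
        simp only [Prod.mk.injEq] at h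
        exact Subtype.ext (Prod.ext_iff.mpr ⟨by omega, h.2⟩)
      · intro p
        have hp := (hX p.1).mp p.2
        refine Or.inr ⟨rfl, ?_⟩
        rw [hma (p : ℤ × ℤ).1 (by omega) (by omega),
          hma ((p : ℤ × ℤ).1 - 1) (by omega) (by omega), seg_mk_prec_iff]
        omega
    · -- shift columns: f (i, j) = (i, j + 1)
      refine ⟨fun p => ⟨((p : ℤ × ℤ).1, (p : ℤ × ℤ).2 + 1), ?_⟩, ?_, ?_⟩
      · have hp := (hX p.1).mp p.2
        rw [hY]
        dsimp only
        omega
      · intro p q hpq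
        have h := Subtype.ext_iff.mp hpq
        simp only [Prod.mk.injEq] at h
        exact Subtype.ext (Prod.ext_iff.mpr ⟨h.1, by omega⟩)
      · intro p
        have hp := (hX p.1).mp p.2
        refine Or.inl ⟨rfl, ?_⟩
        rw [hnb (p : ℤ × ℤ).2 (by omega) (by omega),
          hnb ((p : ℤ × ℤ).2 + 1) (by omega) (by omega), seg_mk_prec_iff]
        omega
  · -- conditions → no matching (counting argument)
    rintro ⟨hu0, huN, hvN'⟩ ⟨f, hinj, hrel⟩
    have huv : u ≤ v := by omega
    obtain ⟨t, ht1, ht6, ht7⟩ : ∃ t : ℤ, u + 1 ≤ t ∧ 1 - N' ≤ t ∧ (t = u + 1 ∨ t = 1 - N') :=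
      ⟨max (u + 1) (1 - N'), le_max_left _ _, le_max_right _ _, max_choice _ _⟩
    have ht2 : t ≤ v + 1 := by omega
    have ht3 : t ≤ 0 := by omega
    have ht4 : t ≤ N - N' := by omega
    set box : Finset (ℤ × ℤ) := Finset.Icc (0:ℤ) (N-1) ×ˢ Finset.Icc (0:ℤ) (N'-1) with hbox
    set FA : Finset (ℤ × ℤ) :=
      box.filter (fun p : ℤ × ℤ => u + 1 ≤ p.1 - p.2 ∧ p.1 - p.2 ≤ t) with hFA
    set FB : Finset (ℤ × ℤ) :=
      box.filter (fun p : ℤ × ℤ => u ≤ p.1 - p.2 ∧ p.1 - p.2 ≤ t - 1) with hFB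
    -- f drops the diagonal
    have hdrop : ∀ (p : ℤ × ℤ) (hp : p ∈ Xs),
        (f ⟨p, hp⟩ : ℤ × ℤ).1 - (f ⟨p, hp⟩ : ℤ × ℤ).2 < p.1 - p.2 := by
      intro p hp
      have hpm := (hX p).mp hp
      have hqm := (hY (f ⟨p, hp⟩ : ℤ × ℤ)).mp (f ⟨p, hp⟩).2
      have hr : (p.1 = (f ⟨p, hp⟩ : ℤ × ℤ).1 ∧ (n (f ⟨p, hp⟩ : ℤ × ℤ).2).Prec (n p.2)) ∨
          (p.2 = (f ⟨p, hp⟩ : ℤ × ℤ).2 ∧ (m p.1).Prec (m (f ⟨p, hp⟩ : ℤ × ℤ).1)) := hrel ⟨p, hp⟩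
      rcases hr with ⟨h1, h2⟩ | ⟨h1, h2⟩
      · rw [hnb (f ⟨p, hp⟩ : ℤ × ℤ).2 (by omega) (by omega),
          hnb p.2 (by omega) (by omega), seg_mk_prec_iff] at h2
        omega
      · rw [hma p.1 (by omega) (by omega),
          hma (f ⟨p, hp⟩ : ℤ × ℤ).1 (by omega) (by omega), seg_mk_prec_iff] at h2
        omega
    -- the extended function
    set F : ℤ × ℤ → ℤ × ℤ := fun p => if h : p ∈ Xs then (f ⟨p, h⟩ : ℤ × ℤ) else p with hF
    have hAX : ∀ p ∈ FA, p ∈ Xs := by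
      intro p hp
      simp only [hFA, Finset.mem_filter, hbox, Finset.mem_product, Finset.mem_Icc] at hp
      rw [hX]
      omega
    have hcardle : FA.card ≤ FB.card := by
      apply Finset.card_le_card_of_injOn F
      · intro p hp
        have hpX := hAX p hp
        simp only [hF, dif_pos hpX]
        have hq := (hY (f ⟨p, hpX⟩ : ℤ × ℤ)).mp (f ⟨p, hpX⟩).2
        have hd := hdrop p hpX
        simp only [hFA, Finset.mem_coe, Finset.mem_filter, hbox, Finset.mem_product, Finset.mem_Icc] at hp
        simp only [hFB, Finset.mem_coe, Finset.mem_filter, hbox, Finset.mem_product, Finset.mem_Icc]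
        omega
      · intro p hp q hq hpq
        have hpX := hAX p (by simpa using hp)
        have hqX := hAX q (by simpa using hq)
        simp only [hF, dif_pos hpX, dif_pos hqX] at hpq
        have := hinj (Subtype.ext hpq)
        exact congrArg Subtype.val this
    have hcardA : FA.card = ∑ d ∈ Finset.Icc (u+1) t, (d + N').toNat :=
      diag_card N N' (u+1) t ht3 ht4
    have hcardB : FB.card = ∑ d ∈ Finset.Icc u (t-1), (d + N').toNat :=
      diag_card N N' u (t-1) (by omega) (by omega)
    have hre : ∑ d ∈ Finset.Icc u (t-1), (d + N').toNat
        = ∑ d ∈ Finset.Icc (u+1) t, (d - 1 + N').toNat := by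
      apply Finset.sum_nbij' (i := fun d : ℤ => d + 1) (j := fun d : ℤ => d - 1)
      · intro x hx; simp only [Finset.mem_Icc] at hx ⊢; omega
      · intro x hx; simp only [Finset.mem_Icc] at hx ⊢; omega
      · intro x _; ring
      · intro x _; ring
      · intro x _; congr 1; ring
    have hlt : ∑ d ∈ Finset.Icc (u+1) t, (d - 1 + N').toNat
        < ∑ d ∈ Finset.Icc (u+1) t, (d + N').toNat := by
      apply Finset.sum_lt_sum
      · intro i _; omega
      · exact ⟨t, Finset.mem_Icc.mpr ⟨ht1, le_rfl⟩, by omega⟩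
    omega
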